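/- arXiv:1309.7117 — 3 statements merged into one kernel-verified Lean document; each statement's English description precedes it below -/
import Mathlib

section
/- Let π = π₁…πₙ be a permutation with π₁ = i, and let π′ = red(π₂…πₙ) be the reduction of the remaining word. Then the number of occurrences of the pattern 1324 in π equals the number of occurrences of 1324 in π′ plus the number of occurrences (a,b,c) of the pattern 213 in π₂…πₙ whose '1'-entry (the smallest value in the occurrence) exceeds i. -/
/-- Number of occurrences of the pattern 1324 in `f`. -/
def occ1324 {m : ℕ} (f : Fin m → Fin m) : ℕ :=
  (Finset.univ.filter (fun q : Fin m × Fin m × Fin m × Fin m =>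
    q.1 < q.2.1 ∧ q.2.1 < q.2.2.1 ∧ q.2.2.1 < q.2.2.2 ∧
    f q.1 < f q.2.2.1 ∧ f q.2.2.1 < f q.2.1 ∧ f q.2.1 < f q.2.2.2)).card

/-!
An occurrence of 1324 in `π` either starts at position `0` or lies entirely in the tail
`π₂…πₙ`. The latter are the occurrences of 1324 in `π' = red(π₂…πₙ)`, since occurrences depend
only on relative order. In the former the `1` is `π₁`, and dropping it leaves an occurrence of 213
in the tail whose `1`-entry exceeds `π₁`.
-/

open Finset

section

variable {α β : Type*} [LinearOrder α] [LinearOrder β]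

def occurrences1324 {m : ℕ} (f : Fin m → α) : Finset (Fin m × Fin m × Fin m × Fin m) :=
  {q | q.1 < q.2.1 ∧ q.2.1 < q.2.2.1 ∧ q.2.2.1 < q.2.2.2 ∧
    f q.1 < f q.2.2.1 ∧ f q.2.2.1 < f q.2.1 ∧ f q.2.1 < f q.2.2.2}

theorem occ1324_eq_card_occurrences1324 {m : ℕ} (f : Fin m → Fin m) :
    occ1324 f = #(occurrences1324 f) := rfl

theorem occurrences1324_congr {m : ℕ} {f : Fin m → α} {g : Fin m → β}
    (h : ∀ j k, g j < g k ↔ f j < f k) : occurrences1324 g = occurrences1324 f := by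
  simp only [occurrences1324, h]

theorem card_filter_fst_ne_zero_occurrences1324 {n : ℕ} (f : Fin (n + 1) → α) :
    #{q ∈ occurrences1324 f | q.1 ≠ 0} = #(occurrences1324 (f ∘ Fin.succ)) := by
  let succ4 := (Fin.succEmb n).prodMap ((Fin.succEmb n).prodMap
    ((Fin.succEmb n).prodMap (Fin.succEmb n)))
  rw [← card_map succ4]
  congr 1
  ext ⟨a, b, c, d⟩
  simp only [occurrences1324, mem_filter, mem_univ, true_and, mem_map, Prod.exists]
  -- all four positions of an occurrence with `a ≠ 0` are nonzero, hence successors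
  induction a using Fin.cases <;> induction b using Fin.cases <;>
    induction c using Fin.cases <;> induction d using Fin.cases <;>
    simp [succ4]

theorem card_filter_fst_eq_zero_occurrences1324 {n : ℕ} (f : Fin (n + 1) → α) :
    #{q ∈ occurrences1324 f | q.1 = 0} =
      #{t : Fin (n + 1) × Fin (n + 1) × Fin (n + 1) | 0 < t.1 ∧ t.1 < t.2.1 ∧ t.2.1 < t.2.2 ∧
        f t.2.1 < f t.1 ∧ f t.1 < f t.2.2 ∧ f 0 < f t.2.1} := by
  symm
  rw [← card_map
    (Function.Embedding.sectR (0 : Fin (n + 1)) (Fin (n + 1) × Fin (n + 1) × Fin (n + 1)))]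
  congr 1
  ext ⟨a, b, c, d⟩
  simp only [occurrences1324, mem_filter, mem_univ, true_and, mem_map, Prod.exists,
    Function.Embedding.sectR_apply, Prod.mk.injEq]
  constructor
  · rintro ⟨b, c, d, ⟨h1, h2, h3, h4, h5, h6⟩, rfl, rfl, rfl, rfl⟩
    exact ⟨⟨h1, h2, h3, h6, h4, h5⟩, rfl⟩
  · rintro ⟨⟨h1, h2, h3, h4, h5, h6⟩, rfl⟩
    exact ⟨b, c, d, ⟨h1, h2, h3, h5, h6, h4⟩, rfl, rfl, rfl, rfl⟩

end

/-- If π' is the reduction of π₂…πₙ (characterized by being order-isomorphic to that word),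
then N₁₃₂₄(π) = N₁₃₂₄(π') + #{occurrences (p,q,r) of 213 in π₂…πₙ with '1'-entry > π₁}. -/
theorem stmt2 (n : ℕ) (π : Equiv.Perm (Fin (n + 1))) (π' : Equiv.Perm (Fin n))
    (hred : ∀ j k : Fin n, π' j < π' k ↔ π j.succ < π k.succ) :
    occ1324 ⇑π = occ1324 ⇑π' +
      (Finset.univ.filter (fun q : Fin (n + 1) × Fin (n + 1) × Fin (n + 1) =>
        0 < q.1 ∧ q.1 < q.2.1 ∧ q.2.1 < q.2.2 ∧
        π q.2.1 < π q.1 ∧ π q.1 < π q.2.2 ∧ π 0 < π q.2.1)).card := by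
  rw [occ1324_eq_card_occurrences1324, occ1324_eq_card_occurrences1324,
    occurrences1324_congr (f := ⇑π ∘ Fin.succ) hred,
    ← card_filter_fst_ne_zero_occurrences1324, ← card_filter_fst_eq_zero_occurrences1324]
  exact (card_filter_add_card_filter_not _).symm.trans (add_comm _ _)
end

section
/- For every n ≥ 1, the number of permutations of {1,…,n} avoiding the pattern 132 equals the n-th Catalan number C_n = (1/(n+1))·binomial(2n, n). -/
/-!
Write a 132-avoiding arrangement of a finite set `S` with maximum `m` as `l₁ ++ m :: l₂`. It avoids
132 exactly when `l₁` and `l₂` do and every entry of `l₁` exceeds every entry of `l₂`; so `l₁`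
arranges an upper subset `T` of `S \ {m}` and `l₂` its complement. An upper subset is determined by
its size, which gives the Catalan recursion `C (k + 1) = ∑ C i * C (k - i)`. Permutations of
`Fin n` are identified with arrangements of `Fin n` through `List.ofFn`.
-/

namespace List

variable {α : Type*} [LinearOrder α]

def Avoids132 (l : List α) : Prop :=
  ∀ x y z, [x, y, z] <+ l → ¬(x < z ∧ z < y)

theorem Avoids132.sublist {l l' : List α} (h : l.Avoids132) (hl : l' <+ l) : l'.Avoids132 :=
  fun x y z hs => h x y z (hs.trans hl)

theorem avoids132_append_cons_iff {m : α} {l₁ l₂ : List α} (h₁ : ∀ x ∈ l₁, x < m)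
    (h₂ : ∀ y ∈ l₂, y < m) :
    (l₁ ++ m :: l₂).Avoids132 ↔ l₁.Avoids132 ∧ l₂.Avoids132 ∧ ∀ x ∈ l₁, ∀ y ∈ l₂, y ≤ x := by
  refine ⟨fun h => ⟨h.sublist (sublist_append_left _ _),
    h.sublist ((sublist_cons_self _ _).trans (sublist_append_right _ _)), fun x hx y hy => ?_⟩, ?_⟩
  · by_contra! hxy
    exact h x m y ((singleton_sublist.2 hx).append ((singleton_sublist.2 hy).cons_cons m))
      ⟨hxy, h₂ y hy⟩
  · rintro ⟨hA₁, hA₂, hcross⟩ x y z hs ⟨hxz, hzy⟩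
    obtain ⟨p₁, p₂, hp, hs₁, hs₂⟩ := sublist_append_iff.1 hs
    rcases p₁ with _ | ⟨a, _ | ⟨b, _ | ⟨c, _ | _⟩⟩⟩ <;>
      simp only [nil_append, cons_append, cons.injEq, reduceCtorEq, and_false] at hp
    · subst hp
      rcases sublist_cons_iff.1 hs₂ with h | ⟨r, hr, hrs⟩
      · exact hA₂ x y z h ⟨hxz, hzy⟩
      · obtain ⟨rfl, rfl⟩ := cons.inj hr
        exact lt_asymm hxz (h₂ z (hrs.subset (by simp)))
    · obtain ⟨rfl, rfl⟩ := hp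
      have hz : z ∈ l₂ := by
        rcases sublist_cons_iff.1 hs₂ with h | ⟨r, hr, hrs⟩
        · exact h.subset (by simp)
        · obtain ⟨rfl, rfl⟩ := cons.inj hr
          exact hrs.subset (by simp)
      exact (hcross x (hs₁.subset (by simp)) z hz).not_gt hxz
    · obtain ⟨rfl, rfl, rfl⟩ := hp
      rcases mem_cons.1 (hs₂.subset (mem_singleton_self z)) with rfl | hz
      · exact lt_asymm hzy (h₁ y (hs₁.subset (by simp)))
      · exact (hcross x (hs₁.subset (by simp)) z hz).not_gt hxz
    · obtain ⟨rfl, rfl, rfl, -⟩ := hp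
      exact hA₁ x y z hs₁ ⟨hxz, hzy⟩

theorem triple_sublist_ofFn_iff {β : Type*} {n : ℕ} (f : Fin n → β) {x y z : β} :
    [x, y, z] <+ ofFn f ↔ ∃ a b c, a < b ∧ b < c ∧ f a = x ∧ f b = y ∧ f c = z := by
  rw [ofFn_eq_map, sublist_map_iff]
  constructor
  · rintro ⟨l', hl', hmap⟩
    obtain ⟨a, b, c, rfl, rfl, rfl, rfl⟩ := by
      simpa [eq_comm (a := [x, y, z]), map_eq_cons_iff] using hmap
    have := (pairwise_lt_finRange n).sublist hl'
    simp only [pairwise_cons, mem_cons, forall_eq_or_imp] at this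
    exact ⟨a, b, c, this.1.1, this.2.1.1, rfl, rfl, rfl⟩
  · rintro ⟨a, b, c, hab, hbc, rfl, rfl, rfl⟩
    have hp : [a, b, c].Pairwise (· < ·) := by simp [hab, hbc, hab.trans hbc]
    exact ⟨[a, b, c], sublist_of_subperm_of_pairwise
      (subperm_of_subset hp.nodup fun x _ => mem_finRange x) hp (pairwise_lt_finRange n), rfl⟩

theorem avoids132_ofFn_iff {n : ℕ} (f : Fin n → α) :
    (ofFn f).Avoids132 ↔ ∀ a b c, a < b → b < c → ¬(f a < f c ∧ f c < f b) := by
  simp only [Avoids132, triple_sublist_ofFn_iff]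
  constructor
  · exact fun h a b c hab hbc => h _ _ _ ⟨a, b, c, hab, hbc, rfl, rfl, rfl⟩
  · rintro h x y z ⟨a, b, c, hab, hbc, rfl, rfl, rfl⟩
    exact h a b c hab hbc

end List

namespace Finset

variable {α : Type*} [LinearOrder α]

def upperSubsets (S : Finset α) : Finset (Finset α) :=
  {T ∈ S.powerset | ∀ x ∈ T, ∀ y ∈ S \ T, y ≤ x}

theorem mem_upperSubsets {S T : Finset α} :
    T ∈ upperSubsets S ↔ T ⊆ S ∧ ∀ x ∈ T, ∀ y ∈ S \ T, y ≤ x := by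
  rw [upperSubsets, mem_filter, mem_powerset]

theorem eq_of_mem_upperSubsets_of_card_eq {S T₁ T₂ : Finset α} (h₁ : T₁ ∈ upperSubsets S)
    (h₂ : T₂ ∈ upperSubsets S) (hcard : #T₁ = #T₂) : T₁ = T₂ := by
  simp only [mem_upperSubsets] at h₁ h₂
  by_contra hne
  obtain ⟨x, hx₁, hx₂⟩ := not_subset.1 fun h => hne (eq_of_subset_of_card_le h hcard.ge)
  obtain ⟨y, hy₂, hy₁⟩ := not_subset.1 fun h => hne (eq_of_subset_of_card_le h hcard.le).symm
  have hyx := h₁.2 x hx₁ y (mem_sdiff.2 ⟨h₂.1 hy₂, hy₁⟩)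
  have hxy := h₂.2 y hy₂ x (mem_sdiff.2 ⟨h₁.1 hx₁, hx₂⟩)
  exact hx₂ (le_antisymm hxy hyx ▸ hy₂)

theorem exists_mem_upperSubsets_card_eq (S : Finset α) {k : ℕ} (hk : k ≤ #S) :
    ∃ T ∈ upperSubsets S, #T = k := by
  induction S using Finset.induction_on_max generalizing k with
  | empty => exact ⟨∅, by simp [mem_upperSubsets], (Nat.le_zero.1 (by simpa using hk)).symm⟩
  | insert a s ha ih =>
    have has : a ∉ s := fun h => lt_irrefl a (ha a h)
    rcases k with _ | k
    · exact ⟨∅, by simp [mem_upperSubsets], rfl⟩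
    obtain ⟨T, hT, rfl⟩ := ih (k := k) (by simpa [card_insert_of_notMem has] using hk)
    simp only [mem_upperSubsets] at hT ⊢
    refine ⟨insert a T, ⟨insert_subset_insert a hT.1, fun x hx y hy => ?_⟩,
      card_insert_of_notMem (has ∘ (hT.1 ·))⟩
    rw [insert_sdiff_insert, mem_sdiff] at hy
    rcases mem_insert.1 hx with rfl | hx
    · exact (ha y hy.1).le
    · exact hT.2 x hx y (mem_sdiff.2 ⟨hy.1, fun h => hy.2 (mem_insert_of_mem h)⟩)

theorem sum_upperSubsets {M : Type*} [AddCommMonoid M] (S : Finset α) (f : ℕ → ℕ → M) :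
    ∑ T ∈ upperSubsets S, f #T #(S \ T) = ∑ p ∈ antidiagonal #S, f p.1 p.2 := by
  refine sum_nbij (fun T => (#T, #(S \ T))) (fun T hT => ?_) (fun T₁ h₁ T₂ h₂ h => ?_)
    (fun p hp => ?_) fun _ _ => rfl
  · rw [HasAntidiagonal.mem_antidiagonal, add_comm]
    exact card_sdiff_add_card_eq_card ((mem_upperSubsets.1 hT).1)
  · exact eq_of_mem_upperSubsets_of_card_eq h₁ h₂ (congrArg Prod.fst h)
  · rw [mem_coe, HasAntidiagonal.mem_antidiagonal] at hp
    obtain ⟨T, hT, hTcard⟩ := exists_mem_upperSubsets_card_eq S (k := p.1) (by omega)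
    refine ⟨T, hT, Prod.ext hTcard ?_⟩
    have := card_sdiff_add_card_eq_card ((mem_upperSubsets.1 hT).1)
    dsimp only
    omega

open scoped Classical in
noncomputable def avoiding132 (S : Finset α) : Finset (List α) :=
  {l ∈ S.toList.permutations.toFinset | l.Avoids132}

theorem mem_avoiding132 {S : Finset α} {l : List α} :
    l ∈ avoiding132 S ↔ (l : Multiset α) = S.val ∧ l.Avoids132 := by
  simp [avoiding132, List.mem_permutations, ← Multiset.coe_eq_coe, coe_toList]

variable {m : α} {s : Finset α}

theorem append_cons_mem_avoiding132_insert (hm : ∀ x ∈ s, x < m) {T : Finset α}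
    (hT : T ∈ upperSubsets s) {l₁ l₂ : List α} (h₁ : l₁ ∈ avoiding132 T)
    (h₂ : l₂ ∈ avoiding132 (s \ T)) : l₁ ++ m :: l₂ ∈ avoiding132 (insert m s) := by
  obtain ⟨hTs, hup⟩ := mem_upperSubsets.1 hT
  obtain ⟨hv₁, hA₁⟩ := mem_avoiding132.1 h₁
  obtain ⟨hv₂, hA₂⟩ := mem_avoiding132.1 h₂
  have mem₁ : ∀ x ∈ l₁, x ∈ T := fun x hx => by rw [← mem_val, ← hv₁]; exact hx
  have mem₂ : ∀ y ∈ l₂, y ∈ s \ T := fun y hy => by rw [← mem_val, ← hv₂]; exact hy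
  refine mem_avoiding132.2 ⟨?_, (List.avoids132_append_cons_iff
    (fun x hx => hm x (hTs (mem₁ x hx))) (fun y hy => hm y (mem_sdiff.1 (mem₂ y hy)).1)).2
      ⟨hA₁, hA₂, fun x hx y hy => hup x (mem₁ x hx) y (mem₂ y hy)⟩⟩
  rw [← Multiset.coe_add, ← Multiset.cons_coe, hv₁, hv₂, Multiset.add_cons, sdiff_val,
    add_tsub_cancel_of_le (val_le_iff.2 hTs), insert_val_of_notMem fun h => lt_irrefl m (hm m h)]

theorem exists_append_cons_of_mem_avoiding132_insert (hm : ∀ x ∈ s, x < m) {l : List α}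
    (hl : l ∈ avoiding132 (insert m s)) : ∃ T ∈ upperSubsets s, ∃ l₁ ∈ avoiding132 T,
      ∃ l₂ ∈ avoiding132 (s \ T), l₁ ++ m :: l₂ = l := by
  obtain ⟨hv, hA⟩ := mem_avoiding132.1 hl
  rw [insert_val_of_notMem fun h => lt_irrefl m (hm m h)] at hv
  obtain ⟨l₁, l₂, rfl⟩ :=
    List.append_of_mem (Multiset.mem_coe.1 (hv ▸ Multiset.mem_cons_self m _))
  rw [← Multiset.coe_add, ← Multiset.cons_coe, Multiset.add_cons, Multiset.cons_inj_right] at hv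
  have hl₁s : (l₁ : Multiset α) ≤ s.val := hv ▸ Multiset.le_add_right _ _
  let T : Finset α := ⟨l₁, Multiset.nodup_of_le hl₁s s.nodup⟩
  have hsT : (s \ T).val = l₂ := by rw [sdiff_val, ← hv, add_tsub_cancel_left]
  have hlt : ∀ x ∈ l₁ ++ l₂, x < m := fun x hx =>
    hm x (by rw [← mem_val, ← hv, Multiset.coe_add]; exact hx)
  obtain ⟨hA₁, hA₂, hcross⟩ := (List.avoids132_append_cons_iff
    (fun x hx => hlt x (List.mem_append_left _ hx))
    (fun y hy => hlt y (List.mem_append_right _ hy))).1 hA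
  refine ⟨T, mem_upperSubsets.2 ⟨val_le_iff.1 hl₁s, fun x hx y hy => hcross x hx y ?_⟩,
    l₁, mem_avoiding132.2 ⟨rfl, hA₁⟩, l₂, mem_avoiding132.2 ⟨hsT.symm, hA₂⟩, rfl⟩
  rwa [← mem_val, hsT] at hy

theorem card_avoiding132_insert (hm : ∀ x ∈ s, x < m) : #(avoiding132 (insert m s)) =
    ∑ T ∈ upperSubsets s, #(avoiding132 T) * #(avoiding132 (s \ T)) := by
  have hms : m ∉ s := fun h => lt_irrefl m (hm m h)
  have not_mem {S : Finset α} (hS : S ⊆ s) {l : List α} (hl : l ∈ avoiding132 S) : m ∉ l :=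
    fun h => hms (hS (by rw [← mem_val, ← (mem_avoiding132.1 hl).1]; exact h))
  simp_rw [← card_product]
  rw [← card_sigma]
  symm
  refine card_bij (fun p _ => p.2.1 ++ m :: p.2.2) (fun p hp => ?_) (fun p hp q hq h => ?_)
    fun l hl => ?_
  · simp only [mem_sigma, mem_product] at hp
    exact append_cons_mem_avoiding132_insert hm hp.1 hp.2.1 hp.2.2
  · obtain ⟨T, l₁, l₂⟩ := p
    obtain ⟨T', l₁', l₂'⟩ := q
    simp only [mem_sigma, mem_product] at hp hq
    obtain ⟨rfl, -, rfl⟩ := (List.append_cons_inj_of_notMem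
      (not_mem (mem_upperSubsets.1 hp.1).1 hp.2.1) (not_mem sdiff_subset hp.2.2)).1 h
    obtain rfl : T = T' :=
      val_injective ((mem_avoiding132.1 hp.2.1).1.symm.trans (mem_avoiding132.1 hq.2.1).1)
    rfl
  · obtain ⟨T, hT, l₁, h₁, l₂, h₂, rfl⟩ := exists_append_cons_of_mem_avoiding132_insert hm hl
    exact ⟨⟨T, l₁, l₂⟩, by simp [hT, h₁, h₂], rfl⟩

theorem card_avoiding132 (S : Finset α) : #(avoiding132 S) = catalan #S := by
  induction S using Finset.strongInduction with
  | H S ih =>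
  rcases S.eq_empty_or_nonempty with rfl | hS
  · rw [card_eq_one.2 ⟨[], ?_⟩, card_empty, catalan_zero]
    ext l
    simp only [mem_avoiding132, empty_val, Multiset.coe_eq_zero, mem_singleton,
      and_iff_left_iff_imp]
    rintro rfl x y z h
    simp at h
  obtain ⟨m, s, hm, rfl⟩ : ∃ m s, (∀ x ∈ s, x < m) ∧ S = insert m s :=
    ⟨S.max' hS, S.erase (S.max' hS), fun x hx =>
      lt_of_le_of_ne (le_max' S x (mem_of_mem_erase hx)) (ne_of_mem_erase hx),
      (insert_erase (max'_mem S hS)).symm⟩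
  have hms : m ∉ s := fun h => lt_irrefl m (hm m h)
  rw [card_avoiding132_insert hm, card_insert_of_notMem hms, catalan_succ',
    ← sum_upperSubsets s fun i j => catalan i * catalan j]
  refine sum_congr rfl fun T hT => ?_
  rw [ih T ((mem_upperSubsets.1 hT).1.trans_ssubset (ssubset_insert hms)),
    ih (s \ T) (sdiff_subset.trans_ssubset (ssubset_insert hms))]

end Finset

open Finset in
theorem card_perm_avoids132 (n : ℕ) :
    #{π : Equiv.Perm (Fin n) | ∀ a b c : Fin n, a < b → b < c → ¬(π a < π c ∧ π c < π b)} =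
      #(avoiding132 (univ : Finset (Fin n))) := by
  refine card_bij (fun π _ => List.ofFn π) (fun π hπ => ?_) (fun π _ π' _ h => ?_) fun l hl => ?_
  · rw [mem_avoiding132, List.avoids132_ofFn_iff, val_univ_fin, Multiset.coe_eq_coe,
      List.ofFn_eq_map]
    exact ⟨π.map_finRange_perm, (mem_filter.1 hπ).2⟩
  · exact Equiv.ext (congrFun (List.ofFn_injective h))
  · obtain ⟨hv, hA⟩ := mem_avoiding132.1 hl
    rw [val_univ_fin, Multiset.coe_eq_coe] at hv
    have hlen : l.length = n := hv.length_eq.trans (List.length_finRange)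
    let π : Equiv.Perm (Fin n) := (finCongr hlen.symm).trans <|
      (hv.nodup_iff.2 (List.nodup_finRange n)).getEquivOfForallMemList l
        fun x => hv.mem_iff.2 (List.mem_finRange x)
    have hπ : List.ofFn π = l := by
      conv_rhs => rw [← List.ofFn_get l, List.ofFn_congr hlen]
      rfl
    exact ⟨π, mem_filter.2 ⟨mem_univ _, (List.avoids132_ofFn_iff π).1 (hπ ▸ hA)⟩, hπ⟩

theorem stmt9_general (n : ℕ) :
    (Finset.univ.filter (fun π : Equiv.Perm (Fin n) =>
      ∀ a b c : Fin n, a < b → b < c → ¬(π a < π c ∧ π c < π b))).card = catalan n ∧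
    (n + 1) * catalan n = Nat.choose (2 * n) n := by
  refine ⟨?_, ?_⟩
  · rw [card_perm_avoids132, Finset.card_avoiding132, Finset.card_fin]
  · rw [succ_mul_catalan_eq_centralBinom, Nat.centralBinom_eq_two_mul_choose]

/-- For every n ≥ 1, the number of 132-avoiding permutations of {1,…,n} equals the n-th
Catalan number Cₙ = binomial(2n, n)/(n+1). -/
theorem stmt9 (n : ℕ) (hn : 1 ≤ n) :
    (Finset.univ.filter (fun π : Equiv.Perm (Fin n) =>
      ∀ a b c : Fin n, a < b → b < c → ¬(π a < π c ∧ π c < π b))).card = catalan n ∧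
    (n + 1) * catalan n = Nat.choose (2 * n) n :=
  stmt9_general n
end

section
/- For all m, n ≥ 1 and any pattern τ, s_{m+n}(τ,0) ≥ s_m(τ,0) · s_n(τ,0), i.e., the sequence counting τ-avoiding permutations is supermultiplicative. -/
/-- `π` avoids the pattern `τ`: there is no strictly increasing choice of positions whose
subsequence is order-isomorphic to `τ`. -/
def Avoids {k n : ℕ} (τ : Equiv.Perm (Fin k)) (π : Equiv.Perm (Fin n)) : Prop :=
  ¬ ∃ f : Fin k → Fin n, StrictMono f ∧ ∀ x y : Fin k, π (f x) < π (f y) ↔ τ x < τ y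

open scoped Classical in
/-- `s n τ` = number of permutations of {1,…,n} avoiding the pattern τ. -/
noncomputable def avoiderCount (n : ℕ) {k : ℕ} (τ : Equiv.Perm (Fin k)) : ℕ :=
  (Finset.univ.filter (fun π : Equiv.Perm (Fin n) => Avoids τ π)).card

/-!
If `τ` is not sum-decomposable, the direct sum `σ ⊕ ρ` of two `τ`-avoiders avoids `τ`: an
occurrence lying in one block is an occurrence in `σ` or in `ρ`, and one straddling both blocks
would split `τ` into a prefix of small values followed by a suffix of large values. Since
`(σ, ρ) ↦ σ ⊕ ρ` is injective, this gives the inequality. If `τ` is sum-decomposable, its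
complement is not, and complementing all permutations shows that `τ` and its complement have the
same avoider counts.
-/

open Finset Fin

theorem Fin.forall_or_exists_iff_lt_of_antitone {k : ℕ} {p : Fin k → Prop} (hp : Antitone p) :
    (∀ x, p x) ∨ ∃ j, ∀ x, p x ↔ x < j := by
  classical
  by_cases h : ∀ x, p x
  · exact .inl h
  push Not at h
  obtain ⟨x₀, hx₀⟩ := h
  set s := univ.filter fun x => ¬ p x
  have hs : s.Nonempty := ⟨x₀, by simp [s, hx₀]⟩
  refine .inr ⟨s.min' hs, fun x => ⟨fun hx => lt_of_not_ge fun hle => ?_, fun hx => ?_⟩⟩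
  · exact (mem_filter.1 (s.min'_mem hs)).2 (hp hle hx)
  · by_contra hnx
    exact (s.min'_le x (by simp [s, hnx])).not_gt hx

theorem Fin.exists_castAdd_eq {m n : ℕ} {i : Fin (m + n)} (h : (i : ℕ) < m) :
    ∃ j, castAdd n j = i :=
  ⟨_, castAdd_castLT n i h⟩

theorem Fin.exists_natAdd_eq {m n : ℕ} {i : Fin (m + n)} (h : m ≤ (i : ℕ)) :
    ∃ j, natAdd m j = i :=
  ⟨_, natAdd_subNat_cast h⟩

namespace Equiv.Perm

variable {k m n N : ℕ}

def IsOccurrence (τ : Perm (Fin k)) (π : Perm (Fin N)) (f : Fin k → Fin N) : Prop :=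
  StrictMono f ∧ ∀ x y, π (f x) < π (f y) ↔ τ x < τ y

theorem IsOccurrence.of_comp {τ : Perm (Fin k)} {σ : Perm (Fin m)} {π : Perm (Fin N)}
    {e e' : Fin m → Fin N} (he : StrictMono e) (he' : StrictMono e')
    (hπ : ∀ i, π (e i) = e' (σ i)) {g : Fin k → Fin m} (h : IsOccurrence τ π (e ∘ g)) :
    IsOccurrence τ σ g := by
  refine ⟨fun x y hxy => he.lt_iff_lt.1 (h.1 hxy), fun x y => ?_⟩
  rw [← h.2 x y, Function.comp_apply, Function.comp_apply, hπ, hπ, he'.lt_iff_lt]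

def IsSumDecomposable (τ : Perm (Fin k)) : Prop :=
  ∃ j : Fin k, 0 < (j : ℕ) ∧ ∀ x y, x < j → j ≤ y → τ x < τ y

def directSum (σ : Perm (Fin m)) (ρ : Perm (Fin n)) : Perm (Fin (m + n)) :=
  finSumFinEquiv.permCongr (σ.sumCongr ρ)

@[simp]
theorem directSum_castAdd (σ : Perm (Fin m)) (ρ : Perm (Fin n)) (i : Fin m) :
    σ.directSum ρ (castAdd n i) = castAdd n (σ i) := by
  simp [directSum]

@[simp]
theorem directSum_natAdd (σ : Perm (Fin m)) (ρ : Perm (Fin n)) (i : Fin n) :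
    σ.directSum ρ (natAdd m i) = natAdd m (ρ i) := by
  simp [directSum]

theorem directSum_lt_directSum (σ : Perm (Fin m)) (ρ : Perm (Fin n)) {i i' : Fin (m + n)}
    (hi : (i : ℕ) < m) (hi' : m ≤ (i' : ℕ)) : σ.directSum ρ i < σ.directSum ρ i' := by
  obtain ⟨a, rfl⟩ := exists_castAdd_eq hi
  obtain ⟨b, rfl⟩ := exists_natAdd_eq hi'
  simp only [directSum_castAdd, directSum_natAdd, Fin.lt_def, val_castAdd, val_natAdd]
  omega

theorem directSum_injective :
    Function.Injective fun p : Perm (Fin m) × Perm (Fin n) => p.1.directSum p.2 :=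
  finSumFinEquiv.permCongr.injective.comp sumCongrHom_injective

theorem avoids_directSum {τ : Perm (Fin k)} (hτ : ¬ τ.IsSumDecomposable) {σ : Perm (Fin m)}
    {ρ : Perm (Fin n)} (hσ : Avoids τ σ) (hρ : Avoids τ ρ) : Avoids τ (σ.directSum ρ) := by
  rintro ⟨f, hf⟩
  have hlow : Antitone fun x => (f x : ℕ) < m :=
    fun x y hxy hy => Nat.lt_of_le_of_lt (hf.1.monotone hxy) hy
  rcases Fin.forall_or_exists_iff_lt_of_antitone hlow with hall | ⟨j, hj⟩
  · choose g hg using fun x => exists_castAdd_eq (hall x)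
    rw [show f = castAdd n ∘ g from funext fun x => (hg x).symm] at hf
    exact hσ ⟨g, IsOccurrence.of_comp (strictMono_castAdd n) (strictMono_castAdd n)
      (directSum_castAdd σ ρ) hf⟩
  rcases Nat.eq_zero_or_pos j with hj0 | hj0
  · have hhigh (x : Fin k) : m ≤ (f x : ℕ) :=
      le_of_not_gt fun h => by simpa [Fin.lt_def, hj0] using (hj x).1 h
    choose g hg using fun x => exists_natAdd_eq (hhigh x)
    rw [show f = natAdd m ∘ g from funext fun x => (hg x).symm] at hf
    exact hρ ⟨g, IsOccurrence.of_comp (strictMono_natAdd m) (strictMono_natAdd m)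
      (directSum_natAdd σ ρ) hf⟩
  · refine hτ ⟨j, hj0, fun x y hx hy => (hf.2 x y).1 (directSum_lt_directSum σ ρ ((hj x).2 hx) ?_)⟩
    exact le_of_not_gt fun h => ((hj y).1 h).not_ge hy

theorem avoiderCount_mul_le_of_not_isSumDecomposable {τ : Perm (Fin k)}
    (hτ : ¬ τ.IsSumDecomposable) :
    avoiderCount m τ * avoiderCount n τ ≤ avoiderCount (m + n) τ := by
  rw [avoiderCount, avoiderCount, avoiderCount, ← card_product]
  refine card_le_card_of_injOn (fun p => p.1.directSum p.2) ?_ directSum_injective.injOn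
  rintro ⟨σ, ρ⟩ hp
  simp only [coe_product, coe_filter, mem_univ, true_and, Set.mem_prod, Set.mem_ofPred_eq] at hp ⊢
  exact avoids_directSum hτ hp.1 hp.2

def complement (π : Perm (Fin N)) : Perm (Fin N) :=
  π.trans Fin.revPerm

@[simp]
theorem complement_apply (π : Perm (Fin N)) (x : Fin N) : π.complement x = (π x).rev :=
  rfl

@[simp]
theorem complement_complement (π : Perm (Fin N)) : π.complement.complement = π :=
  ext fun x => by simp

theorem isOccurrence_complement_iff {τ : Perm (Fin k)} {π : Perm (Fin N)} {f : Fin k → Fin N} :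
    IsOccurrence τ.complement π.complement f ↔ IsOccurrence τ π f := by
  simp only [IsOccurrence, complement_apply, rev_lt_rev]
  exact and_congr_right fun _ => ⟨fun h x y => h y x, fun h x y => h y x⟩

theorem avoids_complement_iff {τ : Perm (Fin k)} {π : Perm (Fin N)} :
    Avoids τ.complement π.complement ↔ Avoids τ π :=
  not_congr (exists_congr fun _ => isOccurrence_complement_iff)

theorem avoiderCount_complement (τ : Perm (Fin k)) :
    avoiderCount N τ.complement = avoiderCount N τ := by
  refine card_nbij' complement complement (fun π hπ => ?_) (fun π hπ => ?_)
    (fun π _ => complement_complement π) (fun π _ => complement_complement π)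
  · simpa [← avoids_complement_iff (τ := τ) (π := π.complement)] using hπ
  · simpa [← avoids_complement_iff (τ := τ) (π := π)] using hπ

theorem IsSumDecomposable.not_complement {τ : Perm (Fin k)} (hτ : τ.IsSumDecomposable) :
    ¬ τ.complement.IsSumDecomposable := by
  obtain ⟨i, hi0, hi⟩ := hτ
  rintro ⟨j, hj0, hj⟩
  have hk : 0 < k := i.pos
  have h₁ := hi ⟨0, hk⟩ ⟨k - 1, by omega⟩ (Fin.lt_def.2 hi0) (Fin.le_def.2 (by simp; omega))
  have h₂ := hj ⟨0, hk⟩ ⟨k - 1, by omega⟩ (Fin.lt_def.2 hj0) (Fin.le_def.2 (by simp; omega))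
  rw [complement_apply, complement_apply, rev_lt_rev] at h₂
  exact h₁.asymm h₂

end Equiv.Perm

theorem stmt10_general (k : ℕ) (τ : Equiv.Perm (Fin k)) (m n : ℕ) :
    avoiderCount m τ * avoiderCount n τ ≤ avoiderCount (m + n) τ := by
  by_cases hτ : τ.IsSumDecomposable
  · simpa only [Equiv.Perm.avoiderCount_complement] using
      Equiv.Perm.avoiderCount_mul_le_of_not_isSumDecomposable (m := m) (n := n) hτ.not_complement
  · exact Equiv.Perm.avoiderCount_mul_le_of_not_isSumDecomposable hτ

/-- Supermultiplicativity: s_{m+n}(τ,0) ≥ s_m(τ,0) · s_n(τ,0) for all m, n ≥ 1 and any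
pattern τ. -/
theorem stmt10 (k : ℕ) (τ : Equiv.Perm (Fin k)) (m n : ℕ) (hm : 1 ≤ m) (hn : 1 ≤ n) :
    avoiderCount m τ * avoiderCount n τ ≤ avoiderCount (m + n) τ :=
  stmt10_general k τ m n
end
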